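/- Let H be a real Hilbert space, let f : H → ℝ be a convex differentiable function whose gradient ∇f is Lipschitz continuous, and let x : [0,∞) → H be a gradient flow of f which has finite length, i.e. ∫₀^∞ ‖x'(t)‖ dt < ∞. Then there exist a convex continuously differentiable function g : ℝ → ℝ which attains its minimum, and a gradient flow s : [0,∞) → ℝ of g (i.e. s'(t) = −g'(s(t))), such that f(x(t)) = g(s(t)) for all t > 0. -/

import Mathlib

open Filter MeasureTheory Set
open scoped Topology

/-!
Let `c t = ‖∇f (x t)‖` be the speed of the flow. Gradient flows of a convex function move
closer together, so comparing `x` with its time shift `x (· + ε)` shows that `c` is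
nonincreasing; it is continuous since `∇f` is Lipschitz, and integrable since the flow has finite
length. The remaining length `s t = ∫_t^∞ c` satisfies `s' = -c`, and monotonicity of `c` lets us
write `c t = G (s t)` with `G` nondecreasing, vanishing on `(-∞, 0]`, and continuous because its
range is the interval `[0, c 0]`. A primitive `g` of `G` is then convex, `C¹` and minimal at `0`;
`s` is a gradient flow of `g`, and `f ∘ x` and `g ∘ s` agree at `0` with the same derivative `-c²`.
-/
theorem Monotone.continuous_of_ordConnected_range {α β : Type*} [LinearOrder α]
    [TopologicalSpace α] [OrderTopology α] [LinearOrder β] [TopologicalSpace β] [OrderTopology β]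
    [DenselyOrdered β] {f : α → β} (hf : Monotone f) (hrange : (range f).OrdConnected) :
    Continuous f :=
  continuous_subtype_val.comp <|
    Monotone.continuous_of_surjective (fun _ _ hab => hf hab) rangeFactorization_surjective

theorem exists_lt_of_integrableOn_Ioi {c : ℝ → ℝ} {a y : ℝ} (hc : IntegrableOn c (Ioi a))
    (hy : 0 < y) : ∃ t > a, c t < y := by
  by_contra! h
  have hconst : IntegrableOn (fun _ => y) (Ioi a) :=
    hc.mono' aestronglyMeasurable_const <| (ae_restrict_iff' measurableSet_Ioi).2 <|
      ae_of_all _ fun t ht => by simpa [abs_of_pos hy] using h t ht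
  simp [integrableOn_const_iff, hy.ne'] at hconst

noncomputable def tailIntegral (c : ℝ → ℝ) (t : ℝ) : ℝ := ∫ u in Ioi t, c u

section TailIntegral

variable {c : ℝ → ℝ}

theorem tailIntegral_sub_tailIntegral {a b : ℝ} (hc : IntegrableOn c (Ioi a)) (hab : a ≤ b) :
    tailIntegral c a - tailIntegral c b = ∫ u in a..b, c u :=
  intervalIntegral.integral_Ioi_sub_Ioi hc hab

theorem tailIntegral_nonneg (hc0 : 0 ≤ c) (t : ℝ) : 0 ≤ tailIntegral c t :=
  setIntegral_nonneg measurableSet_Ioi fun u _ => hc0 u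

theorem antitoneOn_tailIntegral (hc0 : 0 ≤ c) (hci : IntegrableOn c (Ioi 0)) :
    AntitoneOn (tailIntegral c) (Ici 0) := fun a ha b _ hab => by
  have := tailIntegral_sub_tailIntegral (hci.mono_set (Ioi_subset_Ioi ha)) hab
  linarith [intervalIntegral.integral_nonneg (μ := volume) hab fun u _ => hc0 u]

theorem hasDerivWithinAt_tailIntegral (hcc : ContinuousOn c (Ici 0))
    (hci : IntegrableOn c (Ioi 0)) {t : ℝ} (ht : 0 ≤ t) :
    HasDerivWithinAt (tailIntegral c) (-c t) (Ici 0) t := by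
  have : Fact (t ∈ Icc 0 (t + 1)) := ⟨⟨ht, by linarith⟩⟩
  have hcc' : ContinuousOn c (Icc 0 (t + 1)) := hcc.mono Icc_subset_Ici_self
  have hprim : HasDerivWithinAt (fun b => ∫ u in (0:ℝ)..b, c u) (c t) (Icc 0 (t + 1)) t :=
    intervalIntegral.integral_hasDerivWithinAt_right
      ((hcc.mono Icc_subset_Ici_self).intervalIntegrable_of_Icc ht)
      (hcc'.stronglyMeasurableAtFilter_nhdsWithin measurableSet_Icc t) (hcc' t this.out)
  rw [← Ici_inter_Iic, hasDerivWithinAt_inter (Iic_mem_nhds (lt_add_one t))] at hprim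
  refine (hprim.const_sub (tailIntegral c 0)).congr (fun s hs => ?_) ?_
  · rw [← tailIntegral_sub_tailIntegral hci hs, sub_sub_cancel]
  · rw [← tailIntegral_sub_tailIntegral hci ht, sub_sub_cancel]

theorem eq_zero_of_tailIntegral_eq (hc0 : 0 ≤ c) (hcc : ContinuousOn c (Ici 0))
    (hci : IntegrableOn c (Ioi 0)) {a b : ℝ} (ha : 0 ≤ a) (hab : a < b)
    (h : tailIntegral c a = tailIntegral c b) : c a = 0 := by
  by_contra hne
  have hpos : 0 < ∫ u in a..b, c u :=
    intervalIntegral.integral_pos hab (hcc.mono fun u hu => ha.trans hu.1) (fun u _ => hc0 u)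
      ⟨a, left_mem_Icc.2 hab.le, (hc0 a).lt_of_ne' hne⟩
  rw [← tailIntegral_sub_tailIntegral (hci.mono_set (Ioi_subset_Ioi ha)) hab.le, h,
    sub_self] at hpos
  exact hpos.false

theorem eq_zero_of_tailIntegral_eq_zero (hc0 : 0 ≤ c) (hcc : ContinuousOn c (Ici 0))
    (hci : IntegrableOn c (Ioi 0)) {t : ℝ} (ht : 0 ≤ t) (h : tailIntegral c t = 0) :
    c t = 0 := by
  refine eq_zero_of_tailIntegral_eq hc0 hcc hci ht (lt_add_one t) (le_antisymm ?_ ?_)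
  · rw [h]; exact tailIntegral_nonneg hc0 _
  · exact antitoneOn_tailIntegral hc0 hci ht (show (0:ℝ) ≤ t + 1 by linarith) (by linarith)

end TailIntegral

/-- `c` as a function of the remaining tail integral (see `speedAtTail_tailIntegral`). The
supremum makes this well defined where `tailIntegral c` is constant; below the range of
`tailIntegral c` it is `sSup ∅ = 0`. -/
noncomputable def speedAtTail (c : ℝ → ℝ) (u : ℝ) : ℝ :=
  sSup (c '' {t | 0 ≤ t ∧ tailIntegral c t ≤ u})

section SpeedAtTail

variable {c : ℝ → ℝ} {u : ℝ}

theorem le_speedAtTail (hca : AntitoneOn c (Ici 0)) {t : ℝ} (ht : 0 ≤ t)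
    (htu : tailIntegral c t ≤ u) : c t ≤ speedAtTail c u :=
  le_csSup ⟨c 0, by rintro _ ⟨s, hs, rfl⟩; exact hca self_mem_Ici hs.1 hs.1⟩
    ⟨t, ⟨ht, htu⟩, rfl⟩

theorem speedAtTail_le {b : ℝ} (hb : 0 ≤ b) (h : ∀ t, 0 ≤ t → tailIntegral c t ≤ u → c t ≤ b) :
    speedAtTail c u ≤ b :=
  Real.sSup_le (by rintro _ ⟨t, ht, rfl⟩; exact h t ht.1 ht.2) hb

theorem speedAtTail_nonneg (hc0 : 0 ≤ c) : 0 ≤ speedAtTail c u :=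
  Real.sSup_nonneg (by rintro _ ⟨t, -, rfl⟩; exact hc0 t)

theorem monotone_speedAtTail (hc0 : 0 ≤ c) (hca : AntitoneOn c (Ici 0)) :
    Monotone (speedAtTail c) := fun _ _ huv =>
  speedAtTail_le (speedAtTail_nonneg hc0) fun _ ht htu => le_speedAtTail hca ht (htu.trans huv)

theorem speedAtTail_tailIntegral (hc0 : 0 ≤ c) (hcc : ContinuousOn c (Ici 0))
    (hca : AntitoneOn c (Ici 0)) (hci : IntegrableOn c (Ioi 0)) {t : ℝ} (ht : 0 ≤ t) :
    speedAtTail c (tailIntegral c t) = c t := by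
  refine le_antisymm (speedAtTail_le (hc0 t) fun s hs hst => ?_) (le_speedAtTail hca ht le_rfl)
  rcases le_or_gt t s with hts | hst'
  · exact hca ht hs hts
  · have heq := le_antisymm hst (antitoneOn_tailIntegral hc0 hci hs ht hst'.le)
    rw [eq_zero_of_tailIntegral_eq hc0 hcc hci hs hst' heq]
    exact hc0 t

theorem speedAtTail_of_nonpos (hc0 : 0 ≤ c) (hcc : ContinuousOn c (Ici 0))
    (hci : IntegrableOn c (Ioi 0)) (hu : u ≤ 0) : speedAtTail c u = 0 :=
  le_antisymm (speedAtTail_le le_rfl fun t ht htu =>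
    (eq_zero_of_tailIntegral_eq_zero hc0 hcc hci ht
      (le_antisymm (htu.trans hu) (tailIntegral_nonneg hc0 t))).le) (speedAtTail_nonneg hc0)

theorem range_speedAtTail (hc0 : 0 ≤ c) (hcc : ContinuousOn c (Ici 0))
    (hca : AntitoneOn c (Ici 0)) (hci : IntegrableOn c (Ioi 0)) :
    range (speedAtTail c) = Icc 0 (c 0) := by
  refine Subset.antisymm (range_subset_iff.2 fun u => ⟨speedAtTail_nonneg hc0,
    speedAtTail_le (hc0 0) fun t ht _ => hca self_mem_Ici ht ht⟩) ?_
  rintro y ⟨hy0, hy⟩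
  rcases hy0.eq_or_lt with rfl | hy0
  · exact ⟨0, speedAtTail_of_nonpos hc0 hcc hci le_rfl⟩
  obtain ⟨T, hT, hcT⟩ := exists_lt_of_integrableOn_Ioi hci hy0
  obtain ⟨t, ht, rfl⟩ :=
    intermediate_value_Icc' hT.le (hcc.mono Icc_subset_Ici_self) ⟨hcT.le, hy⟩
  exact ⟨tailIntegral c t, speedAtTail_tailIntegral hc0 hcc hca hci ht.1⟩

theorem continuous_speedAtTail (hc0 : 0 ≤ c) (hcc : ContinuousOn c (Ici 0))
    (hca : AntitoneOn c (Ici 0)) (hci : IntegrableOn c (Ioi 0)) : Continuous (speedAtTail c) :=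
  (monotone_speedAtTail hc0 hca).continuous_of_ordConnected_range
    (range_speedAtTail hc0 hcc hca hci ▸ ordConnected_Icc)

end SpeedAtTail

theorem exists_convex_factorization_of_hasDerivWithinAt_neg_sq {c h : ℝ → ℝ} (hc0 : 0 ≤ c)
    (hcc : ContinuousOn c (Ici 0)) (hca : AntitoneOn c (Ici 0)) (hci : IntegrableOn c (Ioi 0))
    (hh : ∀ t ∈ Ici (0:ℝ), HasDerivWithinAt h (-c t ^ 2) (Ici 0) t) :
    ∃ g : ℝ → ℝ, ConvexOn ℝ univ g ∧ ContDiff ℝ 1 g ∧ (∃ m, ∀ y, g m ≤ g y) ∧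
      ∃ s : ℝ → ℝ, (∀ t ∈ Ici (0:ℝ), HasDerivWithinAt s (-deriv g (s t)) (Ici 0) t) ∧
        ∀ t ≥ 0, h t = g (s t) := by
  have hG : Continuous (speedAtTail c) := continuous_speedAtTail hc0 hcc hca hci
  set g : ℝ → ℝ := fun y => h 0 + ∫ v in tailIntegral c 0..y, speedAtTail c v
  have hg : ∀ y, HasDerivAt g (speedAtTail c y) y := fun y =>
    ((hG.integral_hasStrictDerivAt _ y).hasDerivAt).const_add _
  have hg' : deriv g = speedAtTail c := funext fun y => (hg y).deriv
  have hgd : Differentiable ℝ g := fun y => (hg y).differentiableAt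
  have hgconv : ConvexOn ℝ univ g :=
    Monotone.convexOn_univ_of_deriv hgd (hg' ▸ monotone_speedAtTail hc0 hca)
  have htail : ∀ t ∈ Ici (0:ℝ), HasDerivWithinAt (tailIntegral c) (-c t) (Ici 0) t :=
    fun t ht => hasDerivWithinAt_tailIntegral hcc hci ht
  refine ⟨g, hgconv, contDiff_one_iff_deriv.2 ⟨hgd, hg' ▸ hG⟩, ⟨0, fun y => ?_⟩,
    tailIntegral c, fun t ht => ?_, fun t ht => ?_⟩
  · refine hgconv.isMinOn_of_rightDeriv_eq_zero (by simp) ?_ (mem_univ y)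
    rw [(hg 0).hasDerivWithinAt.derivWithin (uniqueDiffWithinAt_Ioi 0)]
    exact speedAtTail_of_nonpos hc0 hcc hci le_rfl
  · rw [hg', speedAtTail_tailIntegral hc0 hcc hca hci ht]
    exact htail t ht
  have hgs : ∀ t ∈ Ici (0:ℝ), HasDerivWithinAt (g ∘ tailIntegral c) (-c t ^ 2) (Ici 0) t := by
    intro t ht
    refine ((hg _).comp_hasDerivWithinAt t (htail t ht)).congr_deriv ?_
    rw [speedAtTail_tailIntegral hc0 hcc hca hci ht]
    ring
  refine eq_of_has_deriv_right_eq (fun y hy => (hh y hy.1).mono (Ici_subset_Ici.2 hy.1))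
    (fun y hy => (hgs y hy.1).mono (Ici_subset_Ici.2 hy.1))
    (fun y hy => (hh y hy.1).continuousWithinAt.mono Icc_subset_Ici_self)
    (fun y hy => (hgs y hy.1).continuousWithinAt.mono Icc_subset_Ici_self) ?_ t ⟨ht, le_rfl⟩
  simp [g]

section GradientFlow

open scoped InnerProductSpace

variable {H : Type*} [NormedAddCommGroup H] [InnerProductSpace ℝ H] [CompleteSpace H]
  {f : H → ℝ}

theorem DifferentiableAt.hasDerivWithinAt_comp_inner_gradient {γ : ℝ → H} {v : H}
    {s : Set ℝ} {t : ℝ} (hf : DifferentiableAt ℝ f (γ t)) (hγ : HasDerivWithinAt γ v s t) :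
    HasDerivWithinAt (fun τ => f (γ τ)) ⟪gradient f (γ t), v⟫_ℝ s t := by
  rw [inner_gradient_left]
  exact hf.hasFDerivAt.comp_hasDerivWithinAt t hγ

theorem ConvexOn.inner_gradient_sub_gradient_nonneg (hconv : ConvexOn ℝ univ f)
    (hdiff : Differentiable ℝ f) (a b : H) :
    0 ≤ ⟪gradient f a - gradient f b, a - b⟫_ℝ := by
  have hφ : ∀ τ, HasDerivAt (f ∘ AffineMap.lineMap b a)
      ⟪gradient f (AffineMap.lineMap b a τ), a - b⟫_ℝ τ := fun τ =>
    hasDerivWithinAt_univ.1 <|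
      (hdiff _).hasDerivWithinAt_comp_inner_gradient AffineMap.hasDerivAt_lineMap.hasDerivWithinAt
  have hmono := (hconv.comp_affineMap (AffineMap.lineMap b a)).monotoneOn_deriv
    (fun τ _ => (hφ τ).differentiableAt) (mem_univ 0) (mem_univ 1) zero_le_one
  rw [(hφ 0).deriv, (hφ 1).deriv, AffineMap.lineMap_apply_zero, AffineMap.lineMap_apply_one]
    at hmono
  rw [inner_sub_left]
  linarith

variable (f) in
def IsGradientFlow (x : ℝ → H) : Prop :=
  ∀ t ∈ Ici (0:ℝ), HasDerivWithinAt x (-gradient f (x t)) (Ici 0) t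

namespace IsGradientFlow

variable {x y : ℝ → H}

theorem comp_add_const (hx : IsGradientFlow f x) {ε : ℝ} (hε : 0 ≤ ε) :
    IsGradientFlow f (fun t => x (t + ε)) := fun t ht => by
  simpa [Function.comp_def] using (hx (t + ε) (add_nonneg ht hε)).scomp t
    ((hasDerivWithinAt_id t (Ici 0)).add_const ε) fun s hs => add_nonneg hs hε

theorem hasDerivWithinAt_comp (hdiff : Differentiable ℝ f) (hx : IsGradientFlow f x) {t : ℝ}
    (ht : 0 ≤ t) :
    HasDerivWithinAt (fun τ => f (x τ)) (-‖gradient f (x t)‖ ^ 2) (Ici 0) t := by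
  convert (hdiff (x t)).hasDerivWithinAt_comp_inner_gradient (hx t ht) using 1
  rw [inner_neg_right, real_inner_self_eq_norm_sq]

theorem antitoneOn_norm_sub (hconv : ConvexOn ℝ univ f) (hdiff : Differentiable ℝ f)
    (hx : IsGradientFlow f x) (hy : IsGradientFlow f y) :
    AntitoneOn (fun t => ‖x t - y t‖) (Ici 0) := by
  set D : ℝ → ℝ := fun t => 2 * ⟪x t - y t, -gradient f (x t) - -gradient f (y t)⟫_ℝ
  have hd : ∀ t ∈ Ici (0:ℝ), HasDerivWithinAt (fun t => ‖x t - y t‖ ^ 2) (D t) (Ici 0) t :=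
    fun t ht => ((hx t ht).sub (hy t ht)).norm_sq
  have hsq : AntitoneOn (fun t => ‖x t - y t‖ ^ 2) (Ici 0) := by
    refine antitoneOn_of_hasDerivWithinAt_nonpos (f' := D) (convex_Ici 0)
      (fun t ht => (hd t ht).continuousWithinAt) (fun t ht => ?_) (fun t _ => ?_)
    · rw [interior_Ici] at ht ⊢
      exact (hd t (Ioi_subset_Ici_self ht)).mono Ioi_subset_Ici_self
    · simp only [D]
      rw [neg_sub_neg, ← neg_sub (gradient f (x t)), inner_neg_right, real_inner_comm]
      linarith [hconv.inner_gradient_sub_gradient_nonneg hdiff (x t) (y t)]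
  exact fun a ha b hb hab => (pow_le_pow_iff_left₀ (norm_nonneg _) (norm_nonneg _)
    two_ne_zero).1 (hsq ha hb hab)

theorem antitoneOn_norm_gradient (hconv : ConvexOn ℝ univ f) (hdiff : Differentiable ℝ f)
    (hx : IsGradientFlow f x) : AntitoneOn (fun t => ‖gradient f (x t)‖) (Ici 0) := by
  -- `‖∇f (x t)‖` is the limit of `‖x (t + ε) - x t‖ / ε`, which for fixed `ε` is antitone in `t`
  -- because `x (· + ε)` is again a gradient flow.
  have hlim : ∀ t ∈ Ici (0:ℝ), Tendsto (fun ε => ‖slope x t (t + ε)‖) (𝓝[>] 0)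
      (𝓝 ‖gradient f (x t)‖) := by
    intro t ht
    have hslope := (hasDerivWithinAt_iff_tendsto_slope' (lt_irrefl t)).1
      ((hx t ht).mono (Ioi_subset_Ici ht))
    have hshift : Tendsto (fun ε => t + ε) (𝓝[>] 0) (𝓝[>] t) :=
      (map_add_left_nhdsGT (c := t) (a := 0)).trans_le (by rw [add_zero])
    simpa using (hslope.comp hshift).norm
  intro a ha b hb hab
  refine le_of_tendsto_of_tendsto (hlim b hb) (hlim a ha) ?_
  filter_upwards [self_mem_nhdsWithin] with ε (hε : 0 < ε)
  simp only [slope_def_module, add_sub_cancel_left, norm_smul]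
  gcongr
  exact (hx.comp_add_const hε.le).antitoneOn_norm_sub hconv hdiff hx ha hb hab

end IsGradientFlow

end GradientFlow

/-- Let `f` be a convex differentiable function on a real Hilbert space
with Lipschitz gradient and let `x` be a gradient flow of `f` of finite length
(`∫₀^∞ ‖x'(t)‖ dt < ∞`, where `x'(t) = −∇f(x(t))`). Then there exist a convex C¹
function `g : ℝ → ℝ` attaining its minimum and a gradient flow `s` of `g` such that
`f(x(t)) = g(s(t))` for all `t > 0`. -/
theorem gradient_flow_reduction_to_one_dim
    (H : Type*) [NormedAddCommGroup H] [InnerProductSpace ℝ H] [CompleteSpace H]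
    (f : H → ℝ) (hconv : ConvexOn ℝ Set.univ f) (hdiff : Differentiable ℝ f)
    (L : NNReal) (hlip : LipschitzWith L (gradient f))
    (x : ℝ → H)
    (hx : ∀ t ∈ Set.Ici (0:ℝ),
      HasDerivWithinAt x (-(gradient f (x t))) (Set.Ici 0) t)
    (hlen : MeasureTheory.IntegrableOn (fun t => ‖gradient f (x t)‖) (Set.Ioi 0)) :
    ∃ g : ℝ → ℝ, ConvexOn ℝ Set.univ g ∧ ContDiff ℝ 1 g ∧
      (∃ m : ℝ, ∀ y : ℝ, g m ≤ g y) ∧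
      ∃ s : ℝ → ℝ,
        (∀ t ∈ Set.Ici (0:ℝ), HasDerivWithinAt s (-(deriv g (s t))) (Set.Ici 0) t) ∧
        ∀ t > (0:ℝ), f (x t) = g (s t) := by
  have hflow : IsGradientFlow f x := hx
  have hspeed : ContinuousOn (fun t => ‖gradient f (x t)‖) (Ici 0) :=
    (hlip.continuous.comp_continuousOn fun t ht => (hx t ht).continuousWithinAt).norm
  obtain ⟨g, hg, hgC1, hgmin, s, hs, hfs⟩ :=
    exists_convex_factorization_of_hasDerivWithinAt_neg_sq (fun t => norm_nonneg _) hspeed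
      (hflow.antitoneOn_norm_gradient hconv hdiff) hlen
      fun t ht => hflow.hasDerivWithinAt_comp hdiff ht
  exact ⟨g, hg, hgC1, hgmin, s, hs, fun t ht => hfs t ht.le⟩
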